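/- For every n ≥ 1 there exist Hermitian matrices M_1, …, M_n indexed by {0,1}^n × {0,1} with operator norm ‖M_i‖ ≤ 1, and a function g : ℝ^n → {0,1}^n, such that for every s ∈ {0,1}^n the following holds: letting ψ_s be the uniform quantum example of the parity function x ↦ s·x mod 2, for every α ∈ ℝ^n satisfying |α_i − ⟨ψ_s, M_i ψ_s⟩| ≤ 1/3 for all i ∈ [n], one has g(α) = s. In other words, the class of parity functions on n bits can be exactly learned under the uniform distribution with n quantum statistical queries of tolerance 1/3. -/

import Mathlib

open Finset Matrix

/-- The quantum example under the uniform distribution of the parity function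
`x ↦ s·x mod 2`, as a vector in `ℂ^({0,1}^n × {0,1})`. -/
noncomputable def parityExample {n : ℕ} (s : Fin n → ZMod 2) :
    (Fin n → ZMod 2) × ZMod 2 → ℂ :=
  fun p => if p.2 = ∑ i, s i * p.1 i then (((Real.sqrt (2 ^ n))⁻¹ : ℝ) : ℂ) else 0

/-! The `i`-th query observable `M` is `X_{eᵢ} ⊗ |−⟩⟨−|`: it flips the `i`-th input bit and
projects the label qubit onto `|−⟩ = (|0⟩ - |1⟩)/√2`. As `X_{eᵢ}` is an involutive permutation,
`M` is Hermitian and `MᴴM = 1 ⊗ |−⟩⟨−|` is a projection, so `‖M‖ ≤ 1`. Flipping `xᵢ` changes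
the label `s·x` by `sᵢ`, so on the parity example `ψ_s` the observable has expectation
`(-1)^{sᵢ}/2`; an answer within `1/3` of it has the sign of `(-1)^{sᵢ}`, which recovers `sᵢ`. -/

open scoped Kronecker

theorem CStarRing.norm_le_one_of_isStarProjection_star_mul_self {E : Type*}
    [NonUnitalNormedRing E] [StarRing E] [CStarRing E] {x : E}
    (hx : IsStarProjection (star x * x)) : ‖x‖ ≤ 1 := by
  have h := hx.norm_le
  rw [CStarRing.norm_star_mul_self] at h
  nlinarith [norm_nonneg x]

namespace Matrix

variable {l n : Type*}

theorem isStarProjection_kronecker [Fintype l] [Fintype n] {R : Type*} [CommSemiring R]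
    [StarRing R] {A : Matrix l l R} {B : Matrix n n R}
    (hA : IsStarProjection A) (hB : IsStarProjection B) : IsStarProjection (A ⊗ₖ B) where
  isIdempotentElem := by
    rw [IsIdempotentElem, ← mul_kronecker_mul, hA.isIdempotentElem.eq, hB.isIdempotentElem.eq]
  isSelfAdjoint := by
    rw [IsSelfAdjoint, star_eq_conjTranspose, conjTranspose_kronecker, ← star_eq_conjTranspose,
      ← star_eq_conjTranspose, hA.isSelfAdjoint.star_eq, hB.isSelfAdjoint.star_eq]

variable [DecidableEq l] {𝕜 : Type*} [RCLike 𝕜]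

theorem isHermitian_permMatrix_kronecker {σ : Equiv.Perm l} (hσ : σ⁻¹ = σ) {Q : Matrix n n 𝕜}
    (hQ : Q.IsHermitian) : (σ.permMatrix 𝕜 ⊗ₖ Q).IsHermitian := by
  rw [IsHermitian, conjTranspose_kronecker, conjTranspose_permMatrix, hσ, hQ.eq]

theorem norm_toEuclideanCLM_permMatrix_kronecker_le_one [Fintype l] [Fintype n] [DecidableEq n]
    (σ : Equiv.Perm l) {Q : Matrix n n 𝕜} (hQ : IsStarProjection Q) : ‖toEuclideanCLM (𝕜 := 𝕜) (σ.permMatrix 𝕜 ⊗ₖ Q)‖ ≤ 1 := by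
  open scoped Matrix.Norms.L2Operator in
  refine CStarRing.norm_le_one_of_isStarProjection_star_mul_self (x := σ.permMatrix 𝕜 ⊗ₖ Q) ?_
  rw [star_eq_conjTranspose, conjTranspose_kronecker, conjTranspose_permMatrix,
    ← mul_kronecker_mul, ← permMatrix_mul, mul_inv_cancel, permMatrix_one, ← star_eq_conjTranspose,
    hQ.isSelfAdjoint.star_eq, hQ.isIdempotentElem.eq]
  exact isStarProjection_kronecker (.one _) hQ

end Matrix

section GraphState

variable {G β : Type*} [Fintype G] [DecidableEq G] [Fintype β] [DecidableEq β]

noncomputable def graphState (r : ℝ) (f : G → β) : G × β → ℂ :=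
  fun p => if p.2 = f p.1 then (r : ℂ) else 0

theorem permMatrix_kronecker_mulVec_graphState (σ : Equiv.Perm G) (A : Matrix β β ℂ) (r : ℝ)
    (f : G → β) (p : G × β) :
    ((σ.permMatrix ℂ ⊗ₖ A) *ᵥ graphState r f) p = A p.2 (f (σ p.1)) * r := by
  simp [mulVec, dotProduct, Fintype.sum_prod_type, graphState, PEquiv.toMatrix_apply]

theorem graphState_dotProduct_permMatrix_kronecker_mulVec (σ : Equiv.Perm G) (A : Matrix β β ℂ)
    (r : ℝ) (f : G → β) :
    star (graphState r f) ⬝ᵥ (σ.permMatrix ℂ ⊗ₖ A) *ᵥ graphState r f =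
      r ^ 2 * ∑ x, A (f x) (f (σ x)) := by
  simp only [dotProduct, permMatrix_kronecker_mulVec_graphState, Fintype.sum_prod_type,
    Pi.star_apply, graphState, apply_ite star, star_zero, RCLike.star_def, Complex.conj_ofReal,
    ite_mul, zero_mul, Finset.sum_ite_eq', Finset.mem_univ, if_true, mul_sum]
  exact Finset.sum_congr rfl fun x _ => by ring

end GraphState

namespace ParityQSQ

theorem zmod_two_cases (b : ZMod 2) : b = 0 ∨ b = 1 := by
  revert b
  decide

noncomputable def halfSign (t : ZMod 2) : ℝ := if t = 0 then 1 / 2 else -(1 / 2)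

/-- The projection `|−⟩⟨−|` onto `(|0⟩ - |1⟩)/√2`. -/
noncomputable def minusProj : Matrix (ZMod 2) (ZMod 2) ℂ := of fun b c => (halfSign (c - b) : ℂ)

theorem minusProj_apply_add (b t : ZMod 2) : minusProj b (b + t) = halfSign t := by
  rw [minusProj, of_apply, add_sub_cancel_left]

theorem isStarProjection_minusProj : IsStarProjection minusProj where
  isIdempotentElem := by
    ext b c
    simp only [minusProj, mul_apply, of_apply]
    rw [show (Finset.univ : Finset (ZMod 2)) = {0, 1} from rfl]
    rcases zmod_two_cases b with rfl | rfl <;> rcases zmod_two_cases c with rfl | rfl <;>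
      norm_num [halfSign]
  isSelfAdjoint := by
    ext b c
    simp only [minusProj, star_apply, of_apply]
    rcases zmod_two_cases b with rfl | rfl <;> rcases zmod_two_cases c with rfl | rfl <;>
      norm_num [halfSign]

variable {n : ℕ}

noncomputable def flipObservable (i : Fin n) :
    Matrix ((Fin n → ZMod 2) × ZMod 2) ((Fin n → ZMod 2) × ZMod 2) ℂ :=
  (Equiv.addRight (Pi.single i 1)).permMatrix ℂ ⊗ₖ minusProj

theorem isHermitian_flipObservable (i : Fin n) : (flipObservable i).IsHermitian :=
  isHermitian_permMatrix_kronecker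
    (by rw [Equiv.Perm.inv_def, Equiv.addRight_symm, ZModModule.neg_eq_self])
    isStarProjection_minusProj.isSelfAdjoint

theorem norm_toEuclideanCLM_flipObservable_le_one (i : Fin n) :
    ‖toEuclideanCLM (𝕜 := ℂ) (flipObservable i)‖ ≤ 1 :=
  norm_toEuclideanCLM_permMatrix_kronecker_le_one _ isStarProjection_minusProj

theorem parityExample_eq_graphState (s : Fin n → ZMod 2) :
    parityExample s = graphState (√(2 ^ n))⁻¹ (s ⬝ᵥ ·) :=
  rfl

theorem parityExample_dotProduct_flipObservable_mulVec (s : Fin n → ZMod 2) (i : Fin n) :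
    star (parityExample s) ⬝ᵥ flipObservable i *ᵥ parityExample s = halfSign (s i) := by
  rw [parityExample_eq_graphState, flipObservable,
    graphState_dotProduct_permMatrix_kronecker_mulVec]
  simp only [Equiv.coe_addRight, dotProduct_add, dotProduct_single_one, minusProj_apply_add,
    sum_const, card_univ, Fintype.card_fun, ZMod.card, Fintype.card_fin, nsmul_eq_mul]
  rw [← Complex.ofReal_pow, inv_pow, Real.sq_sqrt (by positivity)]
  push_cast
  field_simp

noncomputable def signDecoder (α : Fin n → ℝ) : Fin n → ZMod 2 :=
  fun i => if α i < 0 then 1 else 0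

theorem eq_of_abs_sub_halfSign_le {a : ℝ} {t : ZMod 2} (h : |a - halfSign t| ≤ 1 / 3) :
    (if a < 0 then 1 else 0) = t := by
  rcases zmod_two_cases t with rfl | rfl <;> norm_num [halfSign] at h ⊢ <;>
    cases abs_le.mp h <;> linarith

end ParityQSQ

open ParityQSQ

theorem stmt3_general (n : ℕ) :
    ∃ (M : Fin n →
        Matrix ((Fin n → ZMod 2) × ZMod 2) ((Fin n → ZMod 2) × ZMod 2) ℂ)
      (g : (Fin n → ℝ) → (Fin n → ZMod 2)),
      (∀ i, (M i).IsHermitian ∧ ‖Matrix.toEuclideanCLM (𝕜 := ℂ) (M i)‖ ≤ 1) ∧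
      ∀ (s : Fin n → ZMod 2) (α : Fin n → ℝ),
        (∀ i, ‖(α i : ℂ) -
            star (parityExample s) ⬝ᵥ (M i).mulVec (parityExample s)‖ ≤ 1 / 3) →
        g α = s := by
  refine ⟨flipObservable, signDecoder,
    fun i => ⟨isHermitian_flipObservable i, norm_toEuclideanCLM_flipObservable_le_one i⟩,
    fun s α hα => funext fun i => eq_of_abs_sub_halfSign_le ?_⟩
  have := hα i
  rwa [parityExample_dotProduct_flipObservable_mulVec, ← Complex.ofReal_sub, Complex.norm_real,
    Real.norm_eq_abs] at this

/-- The class of parity functions on `n` bits can be exactly learned under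
the uniform distribution with `n` quantum statistical queries of tolerance
`1/3`: there are Hermitian observables `M₁, …, Mₙ` of operator norm at most
`1` and a decoding function `g` such that any answers `α` that are `1/3`-close
to the true expectations `⟨ψ_s, M_i ψ_s⟩` determine `s` via `g α = s`. -/
theorem stmt3 (n : ℕ) (hn : 1 ≤ n) :
    ∃ (M : Fin n →
        Matrix ((Fin n → ZMod 2) × ZMod 2) ((Fin n → ZMod 2) × ZMod 2) ℂ)
      (g : (Fin n → ℝ) → (Fin n → ZMod 2)),
      (∀ i, (M i).IsHermitian ∧ ‖Matrix.toEuclideanCLM (𝕜 := ℂ) (M i)‖ ≤ 1) ∧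
      ∀ (s : Fin n → ZMod 2) (α : Fin n → ℝ),
        (∀ i, ‖(α i : ℂ) -
            star (parityExample s) ⬝ᵥ (M i).mulVec (parityExample s)‖ ≤ 1 / 3) →
        g α = s :=
  stmt3_general n
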